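/- For the simple symmetric random walk on ℤ and x ≠ 0, y ∈ ℤ, the Green function of the walk killed just before its first positive hitting time of 0 is G_0(x,y) = 2·min(|x|,|y|)·1_{xy>0}, and G_0(0,y) = 1 for all y ∈ ℤ. -/

import Mathlib

open MeasureTheory ENNReal
open scoped Classical NNReal

/-- A (time-homogeneous) Markov chain on a state space `E`, given by its
transition probabilities `p` and the family of path-space laws `P x` (the chain started
at `x`), characterized by its finite-dimensional distributions. -/
structure MC (E : Type*) [MeasurableSpace E] where
  p : E → E → ℝ≥0∞
  P : E → Measure (ℕ → E)
  prob : ∀ x, IsProbabilityMeasure (P x)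
  stochastic : ∀ x, ∑' y, p x y = 1
  fdd : ∀ (x : E) (n : ℕ) (xs : Fin (n + 1) → E),
    P x {ω | ∀ i : Fin (n + 1), ω i = xs i}
      = (if xs 0 = x then 1 else 0) * ∏ i : Fin n, p (xs i.castSucc) (xs i.succ)

/-- Irreducibility: every state is reachable from every state with positive probability. -/
def MC.Irreducible {E : Type*} [MeasurableSpace E] (M : MC E) : Prop :=
  ∀ x y : E, ∃ n : ℕ, 0 < M.P x {ω | ω n = y}

/-- Recurrence: started from any state, the chain returns to that state infinitely often
almost surely. -/
def MC.Recurrent {E : Type*} [MeasurableSpace E] (M : MC E) : Prop :=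
  ∀ x : E, M.P x {ω | ∀ N : ℕ, ∃ n, N ≤ n ∧ ω n = x} = 1

/-- Green function of the chain killed just before the first return time `T'_{x0}`:
`G_{x0}(x,y) = E_x[L^y_{T'_{x0} - 1}]`, the expected number of visits to `y` at times `n`
such that `x0` has not been visited at any time `1 ≤ k ≤ n`. -/
noncomputable def MC.green {E : Type*} [MeasurableSpace E] (M : MC E) (x0 x y : E) : ℝ≥0∞ :=
  ∫⁻ ω, (∑' n : ℕ, if ω n = y ∧ ∀ k, 1 ≤ k → k ≤ n → ω k ≠ x0 then (1 : ℝ≥0∞) else 0) ∂ M.P x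

/-- Transition probabilities of the simple symmetric random walk on `ℤ`. -/
noncomputable def srwZ : ℤ → ℤ → ℝ≥0∞ := fun x y =>
  if y = x + 1 ∨ y = x - 1 then (1 : ℝ≥0∞) / 2 else 0

/-!
Let `Gₓ(y) = ∑ₙ Pₓ(Xₙ = y, X_k ≠ 0 for 1 ≤ k ≤ n)`. Splitting off the last step of the path,
`Gₓ` solves the killed equation `Gₓ(0) = 1_{x = 0}`, `Gₓ(y) = 1_{y = x} + (Gₓ(y-1) + Gₓ(y+1))/2`
for `y ≠ 0`, and its partial sums are dominated by every supersolution. The claimed formula is an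
exact, bounded solution, so `Gₓ` is finite and the difference of the two is bounded, vanishes at
`0`, and is affine on each half-line of `ℤ`; hence it is zero.
-/

section Paths

variable {E : Type*}

def AvoidsAfterStart (x₀ : E) {n : ℕ} (xs : Fin (n + 1) → E) : Prop :=
  ∀ k : Fin (n + 1), 1 ≤ (k : ℕ) → xs k ≠ x₀

def killedSet (x₀ : E) (n : ℕ) (y : E) : Set (ℕ → E) :=
  {ω | ω n = y ∧ ∀ k, 1 ≤ k → k ≤ n → ω k ≠ x₀}

lemma killedSet_eq_prefix (x₀ : E) (n : ℕ) (y : E) :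
    killedSet x₀ n y = {ω | AvoidsAfterStart x₀ (fun i : Fin (n + 1) => ω i) ∧ ω n = y} := by
  ext ω
  simp only [killedSet, Set.mem_ofPred_eq, AvoidsAfterStart, Fin.forall_iff]
  grind

lemma killedSet_succ_eq_prefix {x₀ y : E} (hy : y ≠ x₀) (n : ℕ) :
    killedSet x₀ (n + 1) y =
      {ω | AvoidsAfterStart x₀ (fun i : Fin (n + 1) => ω i) ∧ ω (n + 1) = y} := by
  ext ω
  simp only [killedSet, Set.mem_ofPred_eq, AvoidsAfterStart, Fin.forall_iff]
  grind

variable [MeasurableSpace E]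

lemma measurable_prefix (n : ℕ) : Measurable fun (ω : ℕ → E) (i : Fin (n + 1)) => ω i :=
  measurable_pi_lambda _ fun _ => measurable_pi_apply _

variable [Countable E] [MeasurableSingletonClass E]

lemma measurableSet_prefix {n : ℕ} (Q : (Fin (n + 1) → E) → Prop) :
    MeasurableSet {ω : ℕ → E | Q (fun i => ω i)} :=
  (Set.to_countable _).measurableSet.preimage (measurable_prefix n)

lemma measurableSet_killedSet (x₀ : E) (n : ℕ) (y : E) : MeasurableSet (killedSet x₀ n y) :=
  killedSet_eq_prefix x₀ n y ▸
    measurableSet_prefix fun xs => AvoidsAfterStart x₀ xs ∧ xs (Fin.last n) = y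

end Paths

namespace MC

variable {E : Type*} [MeasurableSpace E] (M : MC E)

noncomputable def pathWeight (x : E) {n : ℕ} (xs : Fin (n + 1) → E) : ℝ≥0∞ :=
  (if xs 0 = x then 1 else 0) * ∏ i : Fin n, M.p (xs i.castSucc) (xs i.succ)

lemma pathWeight_snoc (x : E) {n : ℕ} (xs : Fin (n + 1) → E) (z : E) :
    M.pathWeight x (Fin.snoc xs z : Fin (n + 2) → E) =
      M.pathWeight x xs * M.p (xs (Fin.last n)) z := by
  simp only [pathWeight, Fin.prod_univ_castSucc, Fin.snoc_castSucc, Fin.succ_castSucc,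
    Fin.succ_last, Fin.snoc_last, mul_assoc]
  rfl

noncomputable def killedProb (x₀ x : E) (n : ℕ) (y : E) : ℝ≥0∞ :=
  M.P x (killedSet x₀ n y)

lemma killedProb_zero [DecidableEq E] (x₀ x y : E) :
    M.killedProb x₀ x 0 y = if y = x then 1 else 0 := by
  have h := M.fdd x 0 fun _ => y
  simp only [Finset.univ_eq_empty, Finset.prod_empty, mul_one] at h
  convert h using 1
  · rw [killedProb]
    congr 1
    ext ω
    simp only [killedSet, Set.mem_ofPred_eq, Fin.forall_iff]
    grind
  · congr

lemma killedProb_succ_self (x₀ x : E) (n : ℕ) : M.killedProb x₀ x (n + 1) x₀ = 0 :=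
  measure_mono_null (fun _ hω => hω.2 (n + 1) (by omega) le_rfl hω.1) measure_empty

variable [Countable E] [MeasurableSingletonClass E]

lemma measure_prefix_eq_tsum (x : E) {n : ℕ} (Q : (Fin (n + 1) → E) → Prop) :
    M.P x {ω | Q (fun i => ω i)} = ∑' xs, if Q xs then M.pathWeight x xs else 0 := by
  change M.P x ((fun ω (i : Fin (n + 1)) => ω i) ⁻¹' {xs | Q xs}) = _
  rw [← Measure.map_apply (measurable_prefix n) (Set.to_countable _).measurableSet,
    ← Measure.tsum_indicator_apply_singleton _ _ (Set.to_countable _).measurableSet]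
  refine tsum_congr fun xs => ?_
  rw [Set.indicator_apply, Measure.map_apply (measurable_prefix n) (measurableSet_singleton xs),
    pathWeight, ← M.fdd]
  congr 2
  ext ω
  simp [funext_iff]

lemma measure_prefix_and_succ_eq_tsum (x : E) {n : ℕ} (Q : (Fin (n + 1) → E) → Prop) (y : E) :
    M.P x {ω | Q (fun i => ω i) ∧ ω (n + 1) = y} =
      ∑' z, M.P x {ω | Q (fun i => ω i) ∧ ω n = z} * M.p z y := by
  have hlast : M.P x {ω | Q (fun i => ω i) ∧ ω (n + 1) = y} =
      ∑' xs, if Q xs then M.pathWeight x xs * M.p (xs (Fin.last n)) y else 0 := by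
    refine (M.measure_prefix_eq_tsum x
      fun xs : Fin (n + 2) → E => Q (Fin.init xs) ∧ xs (Fin.last _) = y).trans ?_
    rw [← (Fin.snocEquiv fun _ => E).tsum_eq, ENNReal.tsum_prod', ENNReal.tsum_comm]
    refine tsum_congr fun xs => ?_
    by_cases hQ : Q xs <;> simp [Fin.snocEquiv, pathWeight_snoc, hQ]
  have hstep : ∀ z, M.P x {ω | Q (fun i => ω i) ∧ ω n = z} * M.p z y =
      ∑' xs, if Q xs ∧ xs (Fin.last n) = z then M.pathWeight x xs * M.p z y else 0 := by
    intro z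
    have h := M.measure_prefix_eq_tsum x fun xs => Q xs ∧ xs (Fin.last n) = z
    simp only [Fin.val_last] at h
    rw [h, ← ENNReal.tsum_mul_right]
    simp [ite_mul]
  simp_rw [hlast, hstep]
  rw [ENNReal.tsum_comm]
  refine tsum_congr fun xs => ?_
  by_cases hQ : Q xs <;> simp [hQ]

lemma killedProb_succ (x₀ x : E) (n : ℕ) {y : E} (hy : y ≠ x₀) :
    M.killedProb x₀ x (n + 1) y = ∑' z, M.killedProb x₀ x n z * M.p z y := by
  simp only [killedProb, killedSet_succ_eq_prefix hy, killedSet_eq_prefix,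
    measure_prefix_and_succ_eq_tsum]

lemma green_eq_tsum_killedProb (x₀ x y : E) :
    M.green x₀ x y = ∑' n, M.killedProb x₀ x n y := by
  simp only [killedProb, ← lintegral_indicator_one (measurableSet_killedSet _ _ _)]
  rw [← lintegral_tsum fun n =>
    (measurable_one.indicator (measurableSet_killedSet _ _ _)).aemeasurable]
  simp only [green, killedSet, Set.indicator_apply, Set.mem_ofPred_eq, Pi.one_apply]
  congr! 4
  split_ifs <;> rfl

lemma green_self [DecidableEq E] (x₀ x : E) : M.green x₀ x x₀ = if x₀ = x then 1 else 0 := by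
  rw [green_eq_tsum_killedProb, tsum_eq_zero_add' ENNReal.summable, killedProb_zero]
  simp [killedProb_succ_self]

lemma green_eq_add_tsum [DecidableEq E] (x₀ x : E) {y : E} (hy : y ≠ x₀) :
    M.green x₀ x y = (if y = x then 1 else 0) + ∑' z, M.green x₀ x z * M.p z y := by
  simp only [green_eq_tsum_killedProb, ← ENNReal.tsum_mul_right]
  rw [tsum_eq_zero_add' ENNReal.summable, killedProb_zero, ENNReal.tsum_comm]
  simp only [killedProb_succ _ _ _ _ hy]

lemma green_le_of_supersolution [DecidableEq E] (x₀ x : E) (h : E → ℝ≥0∞)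
    (h_self : (if x₀ = x then 1 else 0) ≤ h x₀)
    (h_super : ∀ y, y ≠ x₀ → (if y = x then 1 else 0) + ∑' z, h z * M.p z y ≤ h y) (y : E) :
    M.green x₀ x y ≤ h y := by
  have hpartial : ∀ N y, ∑ n ∈ Finset.range N, M.killedProb x₀ x n y ≤ h y := by
    intro N
    induction N with
    | zero => simp
    | succ N ih =>
      intro y
      rw [Finset.sum_range_succ', killedProb_zero, add_comm]
      by_cases hy : y = x₀
      · simpa [hy, killedProb_succ_self] using h_self
      calc (if y = x then 1 else 0) + ∑ n ∈ Finset.range N, M.killedProb x₀ x (n + 1) y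
          = (if y = x then 1 else 0) +
              ∑' z, (∑ n ∈ Finset.range N, M.killedProb x₀ x n z) * M.p z y := by
            simp only [killedProb_succ _ _ _ _ hy, Finset.sum_mul,
              Summable.tsum_finsetSum fun _ _ => ENNReal.summable]
        _ ≤ (if y = x then 1 else 0) + ∑' z, h z * M.p z y := by gcongr; exact ih _
        _ ≤ h y := h_super y hy
  rw [green_eq_tsum_killedProb, ENNReal.tsum_eq_iSup_nat]
  exact iSup_le fun N => hpartial N y

end MC

lemma eq_natCast_mul_of_add_eq_two_mul {f : ℕ → ℝ} (h0 : f 0 = 0)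
    (hf : ∀ n, f n + f (n + 2) = 2 * f (n + 1)) (n : ℕ) : f n = n * f 1 := by
  induction n using Nat.twoStepInduction with
  | zero => simp [h0]
  | one => simp
  | more n ih₀ ih₁ =>
    push_cast at ih₁ ⊢
    linarith [hf n]

lemma Nat.eq_zero_of_bounded_of_add_eq_two_mul {f : ℕ → ℝ} {B : ℝ} (hB : ∀ n, |f n| ≤ B)
    (h0 : f 0 = 0) (hf : ∀ n, f n + f (n + 2) = 2 * f (n + 1)) (n : ℕ) : f n = 0 := by
  suffices h1 : f 1 = 0 by rw [eq_natCast_mul_of_add_eq_two_mul h0 hf, h1, mul_zero]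
  by_contra h1
  obtain ⟨m, hm⟩ := exists_nat_gt (B / |f 1|)
  have hfm := hB m
  rw [eq_natCast_mul_of_add_eq_two_mul h0 hf, abs_mul, Nat.abs_cast] at hfm
  rw [div_lt_iff₀ (abs_pos.2 h1)] at hm
  linarith

lemma Int.eq_zero_of_bounded_of_add_eq_two_mul {D : ℤ → ℝ} {B : ℝ} (hB : ∀ y, |D y| ≤ B)
    (h0 : D 0 = 0) (hD : ∀ y ≠ 0, D (y - 1) + D (y + 1) = 2 * D y) (y : ℤ) : D y = 0 := by
  have hpos : ∀ n : ℕ, D n = 0 := by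
    refine Nat.eq_zero_of_bounded_of_add_eq_two_mul (fun n => hB n) h0 fun n => ?_
    have := hD (n + 1) (by omega)
    push_cast
    simpa [add_assoc] using this
  have hneg : ∀ n : ℕ, D (-n) = 0 := by
    refine Nat.eq_zero_of_bounded_of_add_eq_two_mul (fun n => hB (-n)) (by simpa using h0)
      fun n => ?_
    have := hD (-(n + 1)) (by omega)
    push_cast
    rw [show -((n : ℤ) + 1) - 1 = -(n + 2) by ring, show -((n : ℤ) + 1) + 1 = -n by ring] at this
    linarith
  rcases Int.natAbs_eq y with hy | hy <;> rw [hy]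
  exacts [hpos _, hneg _]

lemma ENNReal.toReal_eq_add_div_two {a d b c : ℝ≥0∞} (hd : d ≠ ⊤) (hb : b ≠ ⊤) (hc : c ≠ ⊤)
    (h : a = d + (b + c) / 2) : a.toReal = d.toReal + (b.toReal + c.toReal) / 2 := by
  rw [h, ENNReal.toReal_add hd (ENNReal.div_ne_top (ENNReal.add_ne_top.2 ⟨hb, hc⟩) two_ne_zero),
    ENNReal.toReal_div, ENNReal.toReal_add hb hc, ENNReal.toReal_ofNat]

lemma Int.eq_of_bounded_of_eq_add_div_two {f g δ : ℤ → ℝ≥0∞} {B : ℝ≥0∞} (hB : B ≠ ⊤)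
    (hfB : ∀ y, f y ≤ B) (hgB : ∀ y, g y ≤ B) (hδ : ∀ y, δ y ≠ ⊤) (h0 : f 0 = g 0)
    (hf : ∀ y ≠ 0, f y = δ y + (f (y - 1) + f (y + 1)) / 2)
    (hg : ∀ y ≠ 0, g y = δ y + (g (y - 1) + g (y + 1)) / 2) (y : ℤ) : f y = g y := by
  have hf_ne_top : ∀ y, f y ≠ ⊤ := fun y => ne_top_of_le_ne_top hB (hfB y)
  have hg_ne_top : ∀ y, g y ≠ ⊤ := fun y => ne_top_of_le_ne_top hB (hgB y)
  have hdiff : ∀ y, (f y).toReal - (g y).toReal = 0 := by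
    refine Int.eq_zero_of_bounded_of_add_eq_two_mul (B := B.toReal) (fun y => ?_)
      (by rw [h0, sub_self]) fun y hy => ?_
    · have hfy := ENNReal.toReal_mono hB (hfB y)
      have hgy := ENNReal.toReal_mono hB (hgB y)
      rw [abs_le]
      constructor <;> linarith [(f y).toReal_nonneg, (g y).toReal_nonneg]
    · have hfr := ENNReal.toReal_eq_add_div_two (hδ y) (hf_ne_top _) (hf_ne_top _) (hf y hy)
      have hgr := ENNReal.toReal_eq_add_div_two (hδ y) (hg_ne_top _) (hg_ne_top _) (hg y hy)
      linarith
  exact (ENNReal.toReal_eq_toReal_iff' (hf_ne_top y) (hg_ne_top y)).1 (sub_eq_zero.1 (hdiff y))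

lemma ENNReal.eq_add_div_two_iff {a d s : ℝ≥0∞} : a = d + s / 2 ↔ 2 * a = 2 * d + s := by
  rw [← ENNReal.mul_right_inj two_ne_zero ofNat_ne_top, mul_add,
    ENNReal.mul_div_cancel two_ne_zero ofNat_ne_top]

lemma tsum_mul_srwZ (h : ℤ → ℝ≥0∞) (y : ℤ) :
    ∑' z, h z * srwZ z y = (h (y - 1) + h (y + 1)) / 2 := by
  rw [tsum_eq_sum (s := {y - 1, y + 1}) fun z hz => ?_, Finset.sum_pair (by omega)]
  · simp [srwZ, div_eq_mul_inv, add_mul]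
  · simp only [Finset.mem_insert, Finset.mem_singleton, not_or] at hz
    simp [srwZ]
    omega

def srwZKilledGreen (x y : ℤ) : ℕ :=
  if x = 0 then 1 else if 0 < x * y then 2 * min x.natAbs y.natAbs else 0

lemma srwZKilledGreen_zero_right (x : ℤ) : srwZKilledGreen x 0 = if 0 = x then 1 else 0 := by
  unfold srwZKilledGreen
  split_ifs <;> omega

lemma srwZKilledGreen_le (x y : ℤ) : srwZKilledGreen x y ≤ 2 * x.natAbs + 1 := by
  unfold srwZKilledGreen
  split_ifs <;> omega

lemma two_mul_srwZKilledGreen {x y : ℤ} (hy : y ≠ 0) :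
    2 * srwZKilledGreen x y =
      2 * (if y = x then 1 else 0) + (srwZKilledGreen x (y - 1) + srwZKilledGreen x (y + 1)) := by
  have hpos : ∀ z : ℤ, 0 < x * z ↔ 0 < x ∧ 0 < z ∨ x < 0 ∧ z < 0 := fun _ => mul_pos_iff
  unfold srwZKilledGreen
  simp only [hpos]
  split_ifs <;> omega

lemma srwZKilledGreen_eq {x y : ℤ} (hy : y ≠ 0) :
    (srwZKilledGreen x y : ℝ≥0∞) =
      (if y = x then 1 else 0) +
        ((srwZKilledGreen x (y - 1) : ℝ≥0∞) + srwZKilledGreen x (y + 1)) / 2 := by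
  rw [ENNReal.eq_add_div_two_iff]
  exact_mod_cast congrArg (Nat.cast : ℕ → ℝ≥0∞) (two_mul_srwZKilledGreen hy)

lemma MC.green_srwZ (M : MC ℤ) (hp : M.p = srwZ) (x y : ℤ) :
    M.green 0 x y = srwZKilledGreen x y := by
  have hG : ∀ y ≠ 0, M.green 0 x y =
      (if y = x then 1 else 0) + (M.green 0 x (y - 1) + M.green 0 x (y + 1)) / 2 := fun y hy => by
    rw [M.green_eq_add_tsum 0 x hy, hp, tsum_mul_srwZ]
  have hle : ∀ y, M.green 0 x y ≤ srwZKilledGreen x y :=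
    M.green_le_of_supersolution 0 x _ (by simp [srwZKilledGreen_zero_right]) fun y hy => by
      rw [hp, tsum_mul_srwZ, ← srwZKilledGreen_eq hy]
  have hbound : ∀ y, (srwZKilledGreen x y : ℝ≥0∞) ≤ (2 * x.natAbs + 1 : ℕ) := fun y => by
    exact_mod_cast srwZKilledGreen_le x y
  refine Int.eq_of_bounded_of_eq_add_div_two (natCast_ne_top _) (fun y => (hle y).trans (hbound y))
    hbound (fun y => by split_ifs <;> simp) ?_ hG (fun y hy => srwZKilledGreen_eq hy) y
  rw [green_self, srwZKilledGreen_zero_right, Nat.cast_ite, Nat.cast_one, Nat.cast_zero]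

/-- For the simple symmetric random walk on `ℤ`, the Green function of the walk killed just
before its first positive hitting time of `0` is `G_0(x,y) = 2 · min(|x|,|y|) · 1_{xy > 0}`
for `x ≠ 0`, and `G_0(0,y) = 1` for all `y`. -/
theorem srwZ_green_killed
    (M : MC ℤ) (hp : M.p = srwZ) :
    (∀ y : ℤ, M.green 0 0 y = 1) ∧
    (∀ x y : ℤ, x ≠ 0 →
      M.green 0 x y = if 0 < x * y then 2 * (min x.natAbs y.natAbs : ℝ≥0∞) else 0) := by
  refine ⟨fun y => ?_, fun x y hx => ?_⟩ <;> rw [M.green_srwZ hp, srwZKilledGreen]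
  · simp
  · simp [hx, Nat.mono_cast.map_min]
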